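/- (Stability of the interface-coupled dual pressure, abstract version of Lemma 3.2) Let $Q_h \subset L^2(\Omega_p)$ and $X_h \subset H(\mathrm{div},\Omega_p)$ be finite-dimensional spaces, and suppose: (i) for each $\chi \in Q_h$ there exists $v(\chi) \in X_h$ with $(\nabla\cdot v(\chi), q) = (\chi, q)$ for all $q \in Q_h$, with $v(\chi)\cdot n_p = -\chi$ on $\Gamma$ in the sense that $\langle \chi, v(\chi)\cdot n_p\rangle = -\|\chi\|_\Gamma^2$, and with the stability bounds $\|v(\chi)\|_{L^2} \leq C_s(\|\chi\|_{L^2} + \|\chi\|_\Gamma)$, $\|\nabla\cdot v(\chi)\|_{L^2} \leq \|\chi\|_{L^2}$, $\|v(\chi)\cdot n_p\|_\Gamma \leq \|\chi\|_\Gamma$. If $\chi \in Q_h$ satisfies $g_0(\chi, \nabla\cdot v) - g_0\langle \chi, v\cdot n_p\rangle = (F_1, v) + (F_2, \nabla\cdot v) + \langle F_3, v \cdot n_p\rangle$ for all $v \in X_h$, then $\|\chi\|_{L^2} + \|\chi\|_\Gamma \leq C(\|F_1\|_{L^2} + \|F_2\|_{L^2} + \|F_3\|_\Gamma)$, with $C$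 depending only on $g_0$ and $C_s$. -/
import Mathlib


open RealInnerProductSpace

/-- Abstract version of Lemma 3.2: stability of the interface-coupled discrete
Darcy pressure. `S` plays the role of `L²(Ω_p)`, `L2v` of `L²(Ω_p)^d`, `G` of
`L²(Γ)`; `Q` is the discrete pressure space with maps `toS` (inclusion into
`L²(Ω_p)`) and `toG` (interface trace); `Xh` is the discrete velocity space with
embedding `emb`, divergence `dvg` and normal trace `ntr`. Hypothesis `hdual`
encodes the dual function `v(χ)` built from the mixed Poisson problem and the
commuting Raviart–Thomas projection. -/
theorem stmt14 {S L2v G Q Xh : Type*}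
    [NormedAddCommGroup S] [InnerProductSpace ℝ S]
    [NormedAddCommGroup L2v] [InnerProductSpace ℝ L2v]
    [NormedAddCommGroup G] [InnerProductSpace ℝ G]
    [AddCommGroup Q] [Module ℝ Q] [AddCommGroup Xh] [Module ℝ Xh]
    (toS : Q →ₗ[ℝ] S) (toG : Q →ₗ[ℝ] G)
    (emb : Xh →ₗ[ℝ] L2v) (dvg : Xh →ₗ[ℝ] S) (ntr : Xh →ₗ[ℝ] G)
    (g0 Cs : ℝ) (hg0 : 0 < g0) (hCs : 0 ≤ Cs)
    (hdual : ∀ χ : Q, ∃ v : Xh,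
      (∀ q : Q, ⟪dvg v, toS q⟫ = ⟪toS χ, toS q⟫) ∧
      ⟪toG χ, ntr v⟫ = -‖toG χ‖ ^ 2 ∧
      ‖emb v‖ ≤ Cs * (‖toS χ‖ + ‖toG χ‖) ∧
      ‖dvg v‖ ≤ ‖toS χ‖ ∧ ‖ntr v‖ ≤ ‖toG χ‖) :
    ∃ C > 0, ∀ (χ : Q) (F1 : L2v) (F2 : S) (F3 : G),
      (∀ v : Xh, g0 * ⟪toS χ, dvg v⟫ - g0 * ⟪toG χ, ntr v⟫ =
        ⟪F1, emb v⟫ + ⟪F2, dvg v⟫ + ⟪F3, ntr v⟫) →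
      ‖toS χ‖ + ‖toG χ‖ ≤ C * (‖F1‖ + ‖F2‖ + ‖F3‖) := by

  refine ⟨2 * (Cs + 1) / g0, by positivity, fun χ F1 F2 F3 hres => ?_⟩
  obtain ⟨v, hdiv, hntr, he, hd, hn⟩ := hdual χ
  set a := ‖toS χ‖ with ha
  set b := ‖toG χ‖ with hb
  have ha0 : 0 ≤ a := norm_nonneg _
  have hb0 : 0 ≤ b := norm_nonneg _
  have hF : 0 ≤ ‖F1‖ + ‖F2‖ + ‖F3‖ := by positivity
  have key : g0 * (a ^ 2 + b ^ 2) ≤ (Cs + 1) * (‖F1‖ + ‖F2‖ + ‖F3‖) * (a + b) := by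
    have h1 : g0 * ⟪toS χ, dvg v⟫ - g0 * ⟪toG χ, ntr v⟫ = g0 * (a ^ 2 + b ^ 2) := by
      have := hdiv χ
      rw [real_inner_comm] at this
      rw [this, hntr, real_inner_self_eq_norm_sq]
      ring
    have h2 : ⟪F1, emb v⟫ + ⟪F2, dvg v⟫ + ⟪F3, ntr v⟫
        ≤ (Cs + 1) * (‖F1‖ + ‖F2‖ + ‖F3‖) * (a + b) := by
      have i1 : ⟪F1, emb v⟫ ≤ ‖F1‖ * (Cs * (a + b)) :=
        (real_inner_le_norm _ _).trans (by
          exact mul_le_mul_of_nonneg_left he (norm_nonneg _))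
      have i2 : ⟪F2, dvg v⟫ ≤ ‖F2‖ * a :=
        (real_inner_le_norm _ _).trans (mul_le_mul_of_nonneg_left hd (norm_nonneg _))
      have i3 : ⟪F3, ntr v⟫ ≤ ‖F3‖ * b :=
        (real_inner_le_norm _ _).trans (mul_le_mul_of_nonneg_left hn (norm_nonneg _))
      nlinarith [norm_nonneg F1, norm_nonneg F2, norm_nonneg F3,
        mul_nonneg (norm_nonneg F2) hb0, mul_nonneg (norm_nonneg F3) ha0,
        mul_nonneg (mul_nonneg hCs (norm_nonneg F2)) (add_nonneg ha0 hb0),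
        mul_nonneg (mul_nonneg hCs (norm_nonneg F3)) (add_nonneg ha0 hb0)]
    linarith [hres v, h1 ▸ (hres v)]
  have hsq : (a + b) ^ 2 ≤ 2 * (a ^ 2 + b ^ 2) := by nlinarith [sq_nonneg (a - b)]
  rcases eq_or_lt_of_le (by positivity : (0:ℝ) ≤ a + b) with h0 | h0
  · rw [← h0]; positivity
  · rw [div_mul_eq_mul_div, le_div_iff₀ hg0]
    nlinarith
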